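/- Let 1 ≤ k ≤ n and 0 ≤ i ≤ n−k be integers, and suppose R(n,k) is nonempty. If G is chosen uniformly at random from R(n,k) and S is a uniformly random subset of {1,…,n} of size i, independent of G, then the probability that the k×(n−i) submatrix of G obtained by deleting the columns indexed by S has rank strictly less than k is at most 1 − ∏_{j=1}^{k} (1 − 2^{j−1−n+i}). -/

import Mathlib

/-- The `k×n` real `±1` matrix determined by a sign pattern `B`. -/
noncomputable def signMat (k n : ℕ) (B : Fin k → Fin n → Bool) : Matrix (Fin k) (Fin n) ℝ :=
  Matrix.of fun i j => if B i j then 1 else -1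

/-- The ensemble `R(n,k)`: sign patterns of `k×n` `±1` matrices of full row rank `k`
(rank over the reals). -/
noncomputable def Rset (n k : ℕ) : Finset (Fin k → Fin n → Bool) :=
  Finset.univ.filter fun B => (signMat k n B).rank = k

/-- The rank (over `ℝ`) of the `k×(n−|S|)` submatrix of the `±1` matrix of `B` obtained by
deleting the columns indexed by `S`. -/
noncomputable def delRank (k n : ℕ) (B : Fin k → Fin n → Bool) (S : Finset (Fin n)) : ℕ :=
  ((signMat k n B).submatrix id (fun j : {x : Fin n // x ∉ S} => (j : Fin n))).rank

/-!
Fix the deleted set `S`, `|S| = i`, and count the sign patterns whose columns outside `S` already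
have full row rank `k`. A `d`-dimensional subspace of `ℝ^m` contains at most `2^d` sign vectors,
because some `d` coordinates determine its vectors. Choosing the rows one at a time outside the span
of the previous ones therefore gives at least `2^{ik} ∏_{j<k} (2^{n-i} - 2^j) = 2^{nk} P` such
patterns, `P` being the product in the bound. All of them lie in `R(n,k)`, and `|R(n,k)| ≤ 2^{nk}`,
so for each `S` at most `|R(n,k)| (1 - P)` elements of `R(n,k)` lose full rank when `S` is deleted;
averaging over `S` gives the claim.
-/

open Finset Module Function

section SignVectors

variable {K ι α : Type*} [Field K] [Fintype ι]

theorem Submodule.exists_finset_card_le_finrank_injOn_restrict (V : Submodule K (ι → K)) :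
    ∃ J : Finset ι, #J ≤ finrank K V ∧ Set.InjOn J.restrict (V : Set (ι → K)) := by
  classical
  -- `a` selects a basis of the span of the coordinate functionals on `V`: a vector of `V` killed
  -- by the selected ones is killed by every coordinate.
  obtain ⟨κ, a, ha, hspan, hli⟩ :=
    exists_linearIndependent' K
      fun j : ι => LinearMap.proj (R := K) (φ := fun _ => K) j ∘ₗ V.subtype
  have : Fintype κ := Fintype.ofInjective a ha
  refine ⟨univ.image a, ?_, fun v hv w hw hvw => ?_⟩
  · calc #(univ.image a) ≤ Fintype.card κ := card_image_le
      _ ≤ finrank K (Dual K V) := hli.fintype_card_le_finrank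
      _ = finrank K V := Subspace.dual_finrank_eq
  · have hker : Submodule.span K (Set.range fun j : ι => LinearMap.proj j ∘ₗ V.subtype) ≤
        LinearMap.ker (Dual.eval K V ⟨v - w, V.sub_mem hv hw⟩) := by
      rw [← hspan, Submodule.span_le]
      rintro _ ⟨c, rfl⟩
      simpa [sub_eq_zero] using congrFun hvw ⟨a c, mem_image_of_mem a (mem_univ c)⟩
    funext j
    simpa [sub_eq_zero] using hker (Submodule.subset_span ⟨j, rfl⟩)

variable [Fintype α] [Nonempty α] {f : α → K}

theorem Submodule.card_comp_mem_le (hf : Injective f) (V : Submodule K (ι → K)) :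
    Nat.card {b : ι → α // f ∘ b ∈ V} ≤ Fintype.card α ^ finrank K V := by
  obtain ⟨J, hJ, hinj⟩ := V.exists_finset_card_le_finrank_injOn_restrict
  calc Nat.card {b : ι → α // f ∘ b ∈ V}
      ≤ Nat.card (J → α) := by
        refine Nat.card_le_card_of_injective (fun b => J.restrict b.1) fun b c hbc => ?_
        exact Subtype.ext (hf.comp_left (hinj b.2 c.2 (congrArg (f ∘ ·) hbc)))
    _ = Fintype.card α ^ #J := by simp [Nat.card_fun]
    _ ≤ Fintype.card α ^ finrank K V := pow_le_pow_right₀ Fintype.card_pos hJ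

theorem card_pow_sub_pow_le_card_comp_notMem_span (hf : Injective f) {k : ℕ}
    (v : Fin k → ι → K) :
    Fintype.card α ^ Fintype.card ι - Fintype.card α ^ k ≤
      Nat.card {b : ι → α // f ∘ b ∉ Submodule.span K (Set.range v)} := by
  classical
  set W := Submodule.span K (Set.range v)
  have hW : Nat.card {b : ι → α // f ∘ b ∈ W} ≤ Fintype.card α ^ k :=
    (W.card_comp_mem_le hf).trans <| pow_le_pow_right₀ Fintype.card_pos <|
      (finrank_range_le_card (R := K) v).trans_eq (Fintype.card_fin k)
  have hsplit := Fintype.card_subtype_compl fun b : ι → α => f ∘ b ∈ W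
  simp only [Nat.card_eq_fintype_card] at hW ⊢
  rw [hsplit, Fintype.card_fun]
  omega

theorem prod_pow_sub_pow_le_card_linearIndependent (hf : Injective f) (k : ℕ) :
    ∏ j ∈ range k, (Fintype.card α ^ Fintype.card ι - Fintype.card α ^ j) ≤
      Nat.card {C : Fin k → ι → α // LinearIndependent K fun r => f ∘ C r} := by
  classical
  induction k with
  | zero => simp
  | succ k ih =>
    set L := {C : Fin k → ι → α // LinearIndependent K fun r => f ∘ C r}
    have : Fintype L := Fintype.ofFinite L
    let cons : (Σ C : L, {b : ι → α // f ∘ b ∉ Submodule.span K (Set.range fun r => f ∘ C.1 r)}) →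
        {C : Fin (k + 1) → ι → α // LinearIndependent K fun r => f ∘ C r} :=
      fun p => ⟨Fin.cons p.2.1 p.1.1, by
        have h : (fun r => f ∘ (Fin.cons p.2.1 p.1.1 : Fin (k + 1) → ι → α) r) =
            Fin.cons (f ∘ p.2.1) fun r => f ∘ p.1.1 r := Fin.comp_cons (f ∘ ·) _ _
        rw [h]
        exact linearIndependent_finCons.mpr ⟨p.1.2, p.2.2⟩⟩
    have hcons : Injective cons := by
      rintro ⟨⟨C, hC⟩, ⟨b, hb⟩⟩ ⟨⟨C', hC'⟩, ⟨b', hb'⟩⟩ h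
      have h' : (Fin.cons b C : Fin (k + 1) → ι → α) = Fin.cons b' C' := congrArg Subtype.val h
      obtain ⟨rfl, rfl⟩ := Fin.cons_injective2 h'
      rfl
    calc ∏ j ∈ range (k + 1), (Fintype.card α ^ Fintype.card ι - Fintype.card α ^ j)
        = (∏ j ∈ range k, (Fintype.card α ^ Fintype.card ι - Fintype.card α ^ j)) *
            (Fintype.card α ^ Fintype.card ι - Fintype.card α ^ k) := prod_range_succ _ _
      _ ≤ ∑ _C : L, (Fintype.card α ^ Fintype.card ι - Fintype.card α ^ k) := by
        rw [sum_const, card_univ, smul_eq_mul, ← Nat.card_eq_fintype_card (α := L)]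
        exact Nat.mul_le_mul_right _ ih
      _ ≤ ∑ C : L,
            Nat.card {b : ι → α // f ∘ b ∉ Submodule.span K (Set.range fun r => f ∘ C.1 r)} :=
        sum_le_sum fun C _ => card_pow_sub_pow_le_card_comp_notMem_span hf _
      _ = Nat.card (Σ C : L,
            {b : ι → α // f ∘ b ∉ Submodule.span K (Set.range fun r => f ∘ C.1 r)}) :=
        Nat.card_sigma.symm
      _ ≤ _ := Nat.card_le_card_of_injective cons hcons

end SignVectors

theorem Nat.card_subtype_restrict_compl {ρ ι α : Type*} [Fintype ρ] [Fintype ι] [Fintype α]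
    (s : Finset ι) (P : (ρ → {x // x ∉ s} → α) → Prop) :
    Nat.card {B : ρ → ι → α // P fun r j => B r j} =
      Nat.card {C // P C} * (Fintype.card α ^ #s) ^ Fintype.card ρ := by
  classical
  let e : (ρ → ι → α) ≃ (ρ → {x // x ∉ s} → α) × (ρ → {x // ¬x ∉ s} → α) :=
    (Equiv.piCongrRight fun _ => Equiv.piEquivPiSubtypeProd (· ∉ s) fun _ => α).trans
      (Equiv.arrowProdEquivProdArrow _ _ _)
  rw [Nat.card_congr (Equiv.subtypeEquiv (p := fun B => P fun r j => B r j) (q := fun q => P q.1) e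
      fun _ => Iff.rfl),
    Nat.card_congr Equiv.prodSubtypeFstEquivSubtypeProd, Nat.card_prod]
  simp

theorem Matrix.rank_eq_card_iff_linearIndependent_row {m n R : Type*} [Fintype m] [Fintype n]
    [Field R] (A : Matrix m n R) : A.rank = Fintype.card m ↔ LinearIndependent R A.row := by
  refine ⟨fun h => ?_, LinearIndependent.rank_matrix⟩
  rw [linearIndependent_iff_card_eq_finrank_span, ← h]
  exact A.rank_eq_finrank_span_row

theorem pow_mul_prod_Icc_one_sub_zpow {K : Type*} [Field K] {q : K} (hq : q ≠ 0) {n i : ℕ}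
    (hi : i ≤ n) (k : ℕ) :
    (q ^ n) ^ k * ∏ j ∈ Icc 1 k, (1 - q ^ ((j : ℤ) - 1 - n + i)) =
      (q ^ i) ^ k * ∏ j ∈ range k, (q ^ (n - i) - q ^ j) := by
  induction k with
  | zero => simp
  | succ k ih =>
    rw [prod_Icc_succ_top (by omega), prod_range_succ, pow_succ, pow_succ]
    have hfactor :
        q ^ n * (1 - q ^ (((k + 1 : ℕ) : ℤ) - 1 - n + i)) = q ^ i * (q ^ (n - i) - q ^ k) := by
      have h1 : q ^ n * q ^ (((k + 1 : ℕ) : ℤ) - 1 - n + i) = q ^ i * q ^ k := by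
        rw [← zpow_natCast q n, ← zpow_add₀ hq, ← pow_add, ← zpow_natCast]
        congr 1
        push_cast
        ring
      have h2 : q ^ i * q ^ (n - i) = q ^ n := by rw [← pow_add, Nat.add_sub_cancel' hi]
      linear_combination -h1 - h2
    calc _ = (q ^ n) ^ k * (∏ j ∈ Icc 1 k, (1 - q ^ ((j : ℤ) - 1 - n + i))) *
          (q ^ n * (1 - q ^ (((k + 1 : ℕ) : ℤ) - 1 - n + i))) := by ring
      _ = _ := by rw [ih, hfactor]; ring

theorem prod_Icc_one_sub_two_zpow_mem_Icc {n k i : ℕ} (h : k + i ≤ n) :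
    ∏ j ∈ Icc 1 k, (1 - (2 : ℝ) ^ ((j : ℤ) - 1 - n + i)) ∈ Set.Icc 0 1 := by
  have hfactor : ∀ j ∈ Icc 1 k, 1 - (2 : ℝ) ^ ((j : ℤ) - 1 - n + i) ∈ Set.Icc 0 1 := by
    intro j hj
    have he : (j : ℤ) - 1 - n + i ≤ 0 := by have := (mem_Icc.1 hj).2; omega
    exact ⟨sub_nonneg.2 (zpow_le_one_of_nonpos₀ one_le_two he),
      sub_le_self _ (zpow_nonneg zero_le_two _)⟩
  exact ⟨prod_nonneg fun j hj => (hfactor j hj).1,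
    prod_le_one (fun j hj => (hfactor j hj).1) fun j hj => (hfactor j hj).2⟩

def boolSign (b : Bool) : ℝ := if b then 1 else -1

theorem boolSign_injective : Injective boolSign := by
  intro a b
  cases a <;> cases b <;> norm_num [boolSign]

section Ensemble

variable {n k : ℕ} {B : Fin k → Fin n → Bool} {S : Finset (Fin n)}

theorem mem_Rset_iff : B ∈ Rset n k ↔ LinearIndependent ℝ fun r => boolSign ∘ B r := by
  have := (signMat k n B).rank_eq_card_iff_linearIndependent_row
  rw [Fintype.card_fin] at this
  simp only [Rset, mem_filter, mem_univ, true_and]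
  exact this

theorem delRank_eq_iff :
    delRank k n B S = k ↔ LinearIndependent ℝ fun r (j : {x // x ∉ S}) => boolSign (B r j) := by
  have := Matrix.rank_eq_card_iff_linearIndependent_row
    ((signMat k n B).submatrix id ((↑) : {x // x ∉ S} → Fin n))
  rw [Fintype.card_fin] at this
  exact this

theorem delRank_le : delRank k n B S ≤ k :=
  (Matrix.rank_le_card_height _).trans_eq (Fintype.card_fin k)

theorem mem_Rset_of_delRank_eq (h : delRank k n B S = k) : B ∈ Rset n k :=
  mem_Rset_iff.2 <|
    (delRank_eq_iff.1 h).of_comp (LinearMap.funLeft ℝ ℝ ((↑) : {x // x ∉ S} → Fin n))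

variable (S) in
theorem le_card_delRank_eq :
    (2 ^ #S) ^ k * ∏ j ∈ range k, (2 ^ (n - #S) - 2 ^ j) ≤ #{B | delRank k n B S = k} := by
  classical
  have hcompl : Fintype.card {x : Fin n // x ∉ S} = n - #S := by
    simp [Fintype.card_subtype_compl]
  have hLI := prod_pow_sub_pow_le_card_linearIndependent (K := ℝ) (ι := {x : Fin n // x ∉ S})
    boolSign_injective k
  calc (2 ^ #S) ^ k * ∏ j ∈ range k, (2 ^ (n - #S) - 2 ^ j)
      = (∏ j ∈ range k, (2 ^ Fintype.card {x : Fin n // x ∉ S} - 2 ^ j)) * (2 ^ #S) ^ k := by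
        rw [hcompl, mul_comm]
    _ ≤ Nat.card {C : Fin k → {x // x ∉ S} → Bool // LinearIndependent ℝ fun r => boolSign ∘ C r} *
          (2 ^ #S) ^ k :=
        Nat.mul_le_mul_right _ (by simpa using hLI)
    _ = Nat.card {B : Fin k → Fin n → Bool //
          LinearIndependent ℝ fun r (j : {x // x ∉ S}) => boolSign (B r j)} := by
        refine ((Nat.card_subtype_restrict_compl S
          fun C => LinearIndependent ℝ fun r => boolSign ∘ C r).trans ?_).symm
        simp
    _ = #{B | delRank k n B S = k} := by
        rw [← Fintype.card_subtype, ← Nat.card_eq_fintype_card]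
        exact Nat.card_congr (Equiv.subtypeEquivRight fun B => delRank_eq_iff.symm)

variable (S) in
theorem card_filter_delRank_lt_le (h : k + #S ≤ n) :
    (#{B ∈ Rset n k | delRank k n B S < k} : ℝ) ≤
      #(Rset n k) * (1 - ∏ j ∈ Icc 1 k, (1 - (2 : ℝ) ^ ((j : ℤ) - 1 - n + #S))) := by
  classical
  set P := ∏ j ∈ Icc 1 k, (1 - (2 : ℝ) ^ ((j : ℤ) - 1 - n + #S))
  set good : Finset (Fin k → Fin n → Bool) := {B | delRank k n B S = k}
  have hgood : good ⊆ Rset n k := fun B hB => mem_Rset_of_delRank_eq (mem_filter.1 hB).2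
  have hbad : {B ∈ Rset n k | delRank k n B S < k} = Rset n k \ good := by
    ext B
    have := delRank_le (B := B) (S := S)
    simp only [good, mem_filter, mem_sdiff, mem_univ, true_and]
    exact and_congr_right fun _ => by omega
  have hgood_ge : ((2 : ℝ) ^ n) ^ k * P ≤ #good := by
    have hpow : ∀ j ∈ range k, (2 : ℕ) ^ j ≤ 2 ^ (n - #S) := fun j hj =>
      Nat.pow_le_pow_right two_pos (by have := mem_range.1 hj; omega)
    have hcast : (((2 ^ #S) ^ k * ∏ j ∈ range k, (2 ^ (n - #S) - 2 ^ j) : ℕ) : ℝ) =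
        ((2 : ℝ) ^ #S) ^ k * ∏ j ∈ range k, ((2 : ℝ) ^ (n - #S) - 2 ^ j) := by
      rw [Nat.cast_mul, Nat.cast_prod]
      refine congrArg₂ (· * ·) (by push_cast; ring) (prod_congr rfl fun j hj => ?_)
      rw [Nat.cast_sub (hpow j hj)]
      push_cast
      ring
    rw [pow_mul_prod_Icc_one_sub_zpow two_ne_zero (by omega : #S ≤ n), ← hcast]
    exact_mod_cast le_card_delRank_eq S
  have hR : (#(Rset n k) : ℝ) ≤ ((2 : ℝ) ^ n) ^ k := by
    exact_mod_cast (card_le_univ (Rset n k)).trans_eq (by simp)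
  have hP := (prod_Icc_one_sub_two_zpow_mem_Icc h).1
  rw [hbad, card_sdiff_of_subset hgood, Nat.cast_sub (card_le_card hgood)]
  linarith [mul_le_mul_of_nonneg_right hR hP]

end Ensemble

theorem stmt4_general (n k i : ℕ) (hkn : k ≤ n) (hi : i ≤ n - k) :
    ((((Rset n k) ×ˢ Finset.powersetCard i (Finset.univ : Finset (Fin n))).filter
        (fun p => delRank k n p.1 p.2 < k)).card : ℝ)
      / (((Rset n k).card : ℝ) * (n.choose i : ℝ))
    ≤ 1 - ∏ j ∈ Finset.Icc 1 k, (1 - (2:ℝ) ^ ((j : ℤ) - 1 - n + i)) := by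
  have hki : k + i ≤ n := by omega
  set P := ∏ j ∈ Icc 1 k, (1 - (2 : ℝ) ^ ((j : ℤ) - 1 - n + i))
  have hP : P ≤ 1 := (prod_Icc_one_sub_two_zpow_mem_Icc hki).2
  refine div_le_of_le_mul₀ (by positivity) (sub_nonneg.2 hP) ?_
  calc ((((Rset n k) ×ˢ powersetCard i univ).filter fun p => delRank k n p.1 p.2 < k).card : ℝ)
      = ∑ S ∈ powersetCard i (univ : Finset (Fin n)),
          (#{B ∈ Rset n k | delRank k n B S < k} : ℝ) := by
        rw [card_filter, sum_product_right, Nat.cast_sum]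
        refine sum_congr rfl fun S _ => ?_
        rw [card_filter]
    _ ≤ ∑ _S ∈ powersetCard i (univ : Finset (Fin n)), #(Rset n k) * (1 - P) := by
        refine sum_le_sum fun S hS => ?_
        obtain rfl := (mem_powersetCard.1 hS).2
        exact card_filter_delRank_lt_le S hki
    _ = _ := by
        rw [sum_const, card_powersetCard, card_univ, Fintype.card_fin, nsmul_eq_mul]
        ring

/-- For `1 ≤ k ≤ n` and `0 ≤ i ≤ n−k`, if `G` is uniform over `R(n,k)` and `S` is an
independent uniformly random size-`i` subset of the columns, then the probability that
deleting the columns indexed by `S` destroys full row rank is at most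
`1 − ∏_{j=1}^{k} (1 − 2^{j−1−n+i})`. -/
theorem stmt4 (n k i : ℕ) (hk : 1 ≤ k) (hkn : k ≤ n) (hi : i ≤ n - k)
    (hne : (Rset n k).Nonempty) :
    ((((Rset n k) ×ˢ Finset.powersetCard i (Finset.univ : Finset (Fin n))).filter
        (fun p => delRank k n p.1 p.2 < k)).card : ℝ)
      / (((Rset n k).card : ℝ) * (n.choose i : ℝ))
    ≤ 1 - ∏ j ∈ Finset.Icc 1 k, (1 - (2:ℝ) ^ ((j : ℤ) - 1 - n + i)) :=
  stmt4_general n k i hkn hi
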